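/- For points on a line, the optimal 2-means partition is an interval split: there exists an optimal partition of the sorted points into a prefix and a suffix. -/

import Mathlib

/-!
The inertia of a partition `B, Bᶜ` with means `b ≤ c` is the total squared distance of the points
to `b` on `B` and to `c` on `Bᶜ`. This cost only decreases when every point is instead sent to
the nearer of `b` and `c`, and for sorted points the ones nearer to `b` form a prefix, split at
the midpoint `(b + c) / 2`. Finally, replacing `b` and `c` by the means of the prefix and the
suffix decreases the cost once more, down to the inertia of the prefix split.
-/

/-- Inertia (within-cluster sum of squared deviations from the mean) of a cluster of
indices for points `x : Fin n → ℝ`. -/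
noncomputable def clusterInertia {n : ℕ} (x : Fin n → ℝ) (A : Finset (Fin n)) : ℝ :=
  ∑ i ∈ A, (x i - (A.card : ℝ)⁻¹ * ∑ j ∈ A, x j) ^ 2

open Finset
open scoped BigOperators

section LeastSquares

variable {ι : Type*} (s : Finset ι) (f : ι → ℝ)

theorem sum_sq_sub_eq_sum_sq_sub_expect_add (c : ℝ) :
    ∑ i ∈ s, (f i - c) ^ 2 =
      ∑ i ∈ s, (f i - 𝔼 j ∈ s, f j) ^ 2 + #s * (𝔼 j ∈ s, f j - c) ^ 2 := by
  set μ := 𝔼 j ∈ s, f j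
  have hsum : ∑ i ∈ s, f i = #s * μ := (card_mul_expect s f).symm
  have hexpand : ∀ i, (f i - c) ^ 2 = (f i - μ) ^ 2 + (2 * (μ - c) * f i + (c ^ 2 - μ ^ 2)) :=
    fun i => by ring
  simp only [hexpand, sum_add_distrib, ← mul_sum, sum_const, nsmul_eq_mul, hsum]
  ring

theorem sum_sq_sub_expect_le (c : ℝ) :
    ∑ i ∈ s, (f i - 𝔼 j ∈ s, f j) ^ 2 ≤ ∑ i ∈ s, (f i - c) ^ 2 := by
  rw [sum_sq_sub_eq_sum_sq_sub_expect_add s f c]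
  exact le_add_of_nonneg_right (by positivity)

end LeastSquares

theorem sum_add_sum_compl_le_of_forall_le {ι M : Type*} [Fintype ι] [DecidableEq ι]
    [AddCommMonoid M] [PartialOrder M] [IsOrderedAddMonoid M] {A : Finset ι} {f g : ι → M}
    (hA : ∀ i ∈ A, f i ≤ g i) (hAc : ∀ i ∉ A, g i ≤ f i) (B : Finset ι) :
    ∑ i ∈ A, f i + ∑ i ∈ Aᶜ, g i ≤ ∑ i ∈ B, f i + ∑ i ∈ Bᶜ, g i := by
  have hpiecewise (C : Finset ι) : ∑ i ∈ C, f i + ∑ i ∈ Cᶜ, g i = ∑ i, C.piecewise f g i := by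
    rw [sum_piecewise, univ_inter, compl_eq_univ_sdiff]
  rw [hpiecewise, hpiecewise]
  refine sum_le_sum fun i _ => ?_
  by_cases hiA : i ∈ A <;> by_cases hiB : i ∈ B <;>
    simp [piecewise, hiA, hiB, hA i, hAc i]

theorem Monotone.exists_threshold_cut {α β : Type*} [LinearOrder α] [Fintype α] [LinearOrder β]
    {x : α → β} (hx : Monotone x) {t : β} {i j : α} (hij : i ≠ j) (hi : x i ≤ t)
    (hj : t ≤ x j) :
    ∃ m, (∃ k, m < k) ∧ (∀ k ≤ m, x k ≤ t) ∧ ∀ k, m < k → t ≤ x k := by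
  wlog hlt : i < j generalizing i j
  · have hji : j < i := lt_of_le_of_ne (not_lt.1 hlt) hij.symm
    exact this hij.symm ((hx hji.le).trans hi) (hj.trans (hx hji.le)) hji
  set S := univ.filter fun k => k < j ∧ x k ≤ t
  have hS : S.Nonempty := ⟨i, by simp [S, hlt, hi]⟩
  have hmS := S.max'_mem hS
  simp only [S, mem_filter, mem_univ, true_and] at hmS
  refine ⟨S.max' hS, ⟨j, hmS.1⟩, fun k hk => (hx hk).trans hmS.2, fun k hk => ?_⟩
  by_contra hkt
  rcases lt_or_ge k j with hkj | hjk
  · exact hk.not_ge (S.le_max' k (by simp [S, hkj, (not_le.1 hkt).le]))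
  · exact hkt (hj.trans (hx hjk))

theorem clusterInertia_eq {n : ℕ} (x : Fin n → ℝ) (A : Finset (Fin n)) :
    clusterInertia x A = ∑ i ∈ A, (x i - 𝔼 j ∈ A, x j) ^ 2 := by
  rw [clusterInertia, expect_eq_sum_div_card, inv_mul_eq_div]

theorem clusterInertia_le {n : ℕ} (x : Fin n → ℝ) (A : Finset (Fin n)) (c : ℝ) :
    clusterInertia x A ≤ ∑ i ∈ A, (x i - c) ^ 2 := by
  rw [clusterInertia_eq]
  exact sum_sq_sub_expect_le A x c

theorem exists_prefix_inertia_le {n : ℕ} {x : Fin n → ℝ} (hx : Monotone x)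
    {B : Finset (Fin n)} (hB : B.Nonempty) (hBc : Bᶜ.Nonempty) :
    ∃ m : Fin n, (univ.filter (fun i => i ≤ m))ᶜ.Nonempty ∧
      clusterInertia x (univ.filter (fun i => i ≤ m)) +
          clusterInertia x (univ.filter (fun i => i ≤ m))ᶜ ≤
        clusterInertia x B + clusterInertia x Bᶜ := by
  wlog hmean : 𝔼 i ∈ B, x i ≤ 𝔼 i ∈ Bᶜ, x i generalizing B
  · obtain ⟨m, hm, hle⟩ := this hBc (by rwa [compl_compl]) (by rw [compl_compl]; linarith)
    rw [compl_compl, add_comm (clusterInertia x Bᶜ)] at hle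
    exact ⟨m, hm, hle⟩
  set b := 𝔼 i ∈ B, x i
  set c := 𝔼 i ∈ Bᶜ, x i
  obtain ⟨i, hiB, hib⟩ := exists_le_of_expect_le hB (le_refl b)
  obtain ⟨j, hjB, hcj⟩ := exists_le_of_le_expect hBc (le_refl c)
  obtain ⟨m, ⟨k, hmk⟩, hbelow, habove⟩ := hx.exists_threshold_cut (t := (b + c) / 2)
    (ne_of_mem_of_not_mem hiB (mem_compl.1 hjB)) (by linarith) (by linarith)
  set P := univ.filter fun i => i ≤ m
  refine ⟨m, ⟨k, by simpa [P] using hmk⟩, ?_⟩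
  have hnearer : ∑ i ∈ P, (x i - b) ^ 2 + ∑ i ∈ Pᶜ, (x i - c) ^ 2 ≤
      ∑ i ∈ B, (x i - b) ^ 2 + ∑ i ∈ Bᶜ, (x i - c) ^ 2 := by
    refine sum_add_sum_compl_le_of_forall_le (fun i hi => ?_) (fun i hi => ?_) B
    · have := hbelow i (by simpa [P] using hi)
      nlinarith
    · have := habove i (by simpa [P] using hi)
      nlinarith
  calc clusterInertia x P + clusterInertia x Pᶜ
      ≤ ∑ i ∈ P, (x i - b) ^ 2 + ∑ i ∈ Pᶜ, (x i - c) ^ 2 :=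
        add_le_add (clusterInertia_le x P b) (clusterInertia_le x Pᶜ c)
    _ ≤ ∑ i ∈ B, (x i - b) ^ 2 + ∑ i ∈ Bᶜ, (x i - c) ^ 2 := hnearer
    _ = clusterInertia x B + clusterInertia x Bᶜ := by
        rw [clusterInertia_eq, clusterInertia_eq]

/-- for sorted points on a line, among partitions into two nonempty
clusters minimizing the total inertia, there is one which is an interval split: a
prefix `{i : i ≤ m}` and the complementary suffix. -/
theorem one_dim_two_means_interval_split
    (n : ℕ) (hn : 2 ≤ n) (x : Fin n → ℝ) (hsorted : Monotone x) :
    ∃ m : Fin n,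
      (Finset.univ.filter (fun i => i ≤ m)).Nonempty ∧
      (Finset.univ.filter (fun i => i ≤ m))ᶜ.Nonempty ∧
      ∀ B : Finset (Fin n), B.Nonempty → Bᶜ.Nonempty →
        clusterInertia x (Finset.univ.filter (fun i => i ≤ m)) +
          clusterInertia x (Finset.univ.filter (fun i => i ≤ m))ᶜ ≤
        clusterInertia x B + clusterInertia x Bᶜ := by
  set splits := univ.filter fun m : Fin n => (univ.filter (fun i => i ≤ m))ᶜ.Nonempty
  have hsplits : splits.Nonempty :=
    ⟨⟨0, by omega⟩, by simpa [splits] using ⟨⟨1, by omega⟩, by simp⟩⟩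
  obtain ⟨m, hm, hmin⟩ := splits.exists_min_image
    (fun m => clusterInertia x (univ.filter (fun i => i ≤ m)) +
      clusterInertia x (univ.filter (fun i => i ≤ m))ᶜ) hsplits
  refine ⟨m, ⟨m, by simp⟩, (mem_filter.1 hm).2, fun B hB hBc => ?_⟩
  obtain ⟨m', hm', hle⟩ := exists_prefix_inertia_le hsorted hB hBc
  exact (hmin m' (mem_filter.2 ⟨mem_univ _, hm'⟩)).trans hle
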